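/- The map φ: 𝒞ₙ → 𝒢ₙᵉˣᵗ assigning to a configuration of little cubes its separation graph is a lax morphism of operads: for c ∈ 𝒞ₙ(A), d ∈ 𝒞ₙ(B), and a ∈ A, one has φ(c ∘_a d) ≤ φ(c) ∘_a φ(d) in the poset 𝒢ₙᵉˣᵗ(A[B/a]). -/

import Mathlib

/-! Little cubes are recorded by their lower corner `v` and (positive) edge lengths `u`,
with coordinates indexed by `ℕ` (only the first `n` coordinates being relevant). -/

/-- `c_x` is `i`-below `c_y`: the cubes are separated by a hyperplane in direction `i`. -/
def sep {A : Type} (v u : A → ℕ → ℝ) (i : ℕ) (x y : A) : Prop :=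
  v x i + u x i ≤ v y i

/-- The weight of the edge of the separation graph `φ(c)` between `x` and `y`:
the smallest direction in which the two cubes are separated. -/
noncomputable def wphi {A : Type} (v u : A → ℕ → ℝ) (x y : A) : ℕ :=
  sInf {i | sep v u i x y ∨ sep v u i y x}

/-- The direction of the edge of `φ(c)` between `x` and `y`: from `x` to `y` iff `c_x`
is below `c_y` in the minimal separating direction. -/
def dphi {A : Type} (v u : A → ℕ → ℝ) (x y : A) : Prop :=
  sep v u (wphi v u x y) x y

/-- Lower corners of the composite configuration `c ∘_a d`. -/
def vComp {A B : Type} (a : A) (v u : A → ℕ → ℝ) (v' : B → ℕ → ℝ) :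
    ({x : A // x ≠ a} ⊕ B) → ℕ → ℝ
  | .inl x => v x.1
  | .inr b => fun i => u a i * v' b i + v a i

/-- Edge lengths of the composite configuration `c ∘_a d`. -/
def uComp {A B : Type} (a : A) (u : A → ℕ → ℝ) (u' : B → ℕ → ℝ) :
    ({x : A // x ≠ a} ⊕ B) → ℕ → ℝ
  | .inl x => u x.1
  | .inr b => fun i => u a i * u' b i

/-- The direction relation of the composite graph `φ(c) ∘_a φ(d)`. -/
def dirCompPhi {A B : Type} (a : A) (v u : A → ℕ → ℝ) (v' u' : B → ℕ → ℝ) :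
    ({x : A // x ≠ a} ⊕ B) → ({x : A // x ≠ a} ⊕ B) → Prop
  | .inl x, .inl y => dphi v u x.1 y.1
  | .inl x, .inr _ => dphi v u x.1 a
  | .inr _, .inl y => dphi v u a y.1
  | .inr b, .inr b' => dphi v' u' b b'

/-- The weight function of the composite graph `φ(c) ∘_a φ(d)`. -/
noncomputable def wtCompPhi {A B : Type} (a : A) (v u : A → ℕ → ℝ) (v' u' : B → ℕ → ℝ) :
    ({x : A // x ≠ a} ⊕ B) → ({x : A // x ≠ a} ⊕ B) → ℕ
  | .inl x, .inl y => wphi v u x.1 y.1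
  | .inl x, .inr _ => wphi v u x.1 a
  | .inr _, .inl y => wphi v u a y.1
  | .inr b, .inr b' => wphi v' u' b b'

/-! Every cube of `c ∘_a d` lies inside a cube of `c` (inside `c_a` when it comes from `d`), so
a separation between two cubes of `c` is inherited, with its direction, by the cubes they
contain: the weight can only drop. If it does not drop, the direction cannot be reversed, since
cubes of positive width are never separated both ways in the same direction. Two cubes coming
from `d` are separated exactly as in `d`, rescaled by `c_a`. -/

section Separation

variable {A P : Type} (v u : A → ℕ → ℝ)

theorem wphi_comm (x y : A) : wphi v u x y = wphi v u y x :=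
  congrArg sInf (Set.ext fun _ => or_comm)

variable {v u}

theorem wphi_le_of_sep {i : ℕ} {x y : A} (h : sep v u i x y ∨ sep v u i y x) :
    wphi v u x y ≤ i :=
  Nat.sInf_le h

theorem dphi_or_dphi {x y : A} (h : ∃ i, sep v u i x y ∨ sep v u i y x) :
    dphi v u x y ∨ dphi v u y x := by
  rw [dphi, dphi, wphi_comm v u y x]
  exact Nat.sInf_mem h

theorem not_sep_of_sep {i : ℕ} {x y : A} (hx : 0 < u x i) (hy : 0 < u y i)
    (h : sep v u i x y) : ¬ sep v u i y x := by
  unfold sep at *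
  linarith

theorem sep_affine_iff {s t : ℕ → ℝ} (hs : ∀ i, 0 < s i) {i : ℕ} {x y : A} :
    sep (fun x i => s i * v x i + t i) (fun x i => s i * u x i) i x y ↔ sep v u i x y := by
  show s i * v x i + t i + s i * u x i ≤ s i * v y i + t i ↔ _
  rw [show s i * v x i + t i + s i * u x i = s i * (v x i + u x i) + t i by ring,
    add_le_add_iff_right, mul_le_mul_iff_right₀ (hs i), sep]

theorem wphi_affine {s t : ℕ → ℝ} (hs : ∀ i, 0 < s i) (x y : A) :
    wphi (fun x i => s i * v x i + t i) (fun x i => s i * u x i) x y = wphi v u x y := by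
  simp only [wphi, sep_affine_iff hs]

theorem dphi_affine_iff {s t : ℕ → ℝ} (hs : ∀ i, 0 < s i) {x y : A} :
    dphi (fun x i => s i * v x i + t i) (fun x i => s i * u x i) x y ↔ dphi v u x y := by
  rw [dphi, dphi, wphi_affine hs, sep_affine_iff hs]

def Refines (v u : A → ℕ → ℝ) (v' u' : P → ℕ → ℝ) (f : P → A) : Prop :=
  ∀ p i, v (f p) i ≤ v' p i ∧ v' p i + u' p i ≤ v (f p) i + u (f p) i

variable {v' u' : P → ℕ → ℝ} {f : P → A}

theorem Refines.sep_of_sep {i : ℕ} {p q : P} (hf : Refines v u v' u' f)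
    (h : sep v u i (f p) (f q)) : sep v' u' i p q := by
  have := hf p i
  have := hf q i
  unfold sep at *
  linarith

theorem Refines.wphi_le {p q : P} (hf : Refines v u v' u' f)
    (h : ∃ i, sep v u i (f p) (f q) ∨ sep v u i (f q) (f p)) :
    wphi v' u' p q ≤ wphi v u (f p) (f q) := by
  refine wphi_le_of_sep ?_
  rcases Nat.sInf_mem h with h | h
  exacts [.inl (hf.sep_of_sep h), .inr (hf.sep_of_sep h)]

theorem Refines.lax (hf : Refines v u v' u' f) (hu' : ∀ p i, 0 < u' p i) (p q : P)
    (hsep : ∃ i, sep v u i (f p) (f q) ∨ sep v u i (f q) (f p)) (hd : dphi v' u' p q) :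
    (dphi v u (f p) (f q) ∧ wphi v' u' p q ≤ wphi v u (f p) (f q)) ∨
      (dphi v u (f q) (f p) ∧ wphi v' u' p q < wphi v u (f q) (f p)) := by
  have hle := hf.wphi_le hsep
  rcases dphi_or_dphi hsep with h | h
  · exact .inl ⟨h, hle⟩
  · have hqp : sep v u (wphi v u (f p) (f q)) (f q) (f p) := by rwa [dphi, wphi_comm] at h
    rw [wphi_comm v u (f q)]
    refine .inr ⟨h, hle.lt_of_ne fun heq => ?_⟩
    rw [dphi, heq] at hd
    exact not_sep_of_sep (hu' p _) (hu' q _) hd (hf.sep_of_sep hqp)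

end Separation

section Composition

variable {A B : Type} {a : A} {v u : A → ℕ → ℝ} {v' u' : B → ℕ → ℝ}

theorem refines_comp (hua : ∀ i, 0 ≤ u a i) (hv' : ∀ b i, 0 ≤ v' b i)
    (hv'1 : ∀ b i, v' b i + u' b i ≤ 1) :
    Refines v u (vComp a v u v') (uComp a u u') (Sum.elim Subtype.val fun _ => a) := by
  rintro (x | b) i
  · exact ⟨le_rfl, le_rfl⟩
  · refine ⟨le_add_of_nonneg_left (mul_nonneg (hua i) (hv' b i)), ?_⟩
    simp only [vComp, uComp, Sum.elim_inr]
    nlinarith [hua i, hv'1 b i]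

theorem uComp_pos (hu : ∀ x i, 0 < u x i) (hu' : ∀ b i, 0 < u' b i) (p : {x // x ≠ a} ⊕ B)
    (i : ℕ) : 0 < uComp a u u' p i := by
  rcases p with x | b
  exacts [hu x i, mul_pos (hu a i) (hu' b i)]

theorem wphi_comp_inr (hua : ∀ i, 0 < u a i) (b b' : B) :
    wphi (vComp a v u v') (uComp a u u') (.inr b) (.inr b') = wphi v' u' b b' :=
  wphi_affine (t := v a) hua b b'

theorem dphi_comp_inr_iff (hua : ∀ i, 0 < u a i) {b b' : B} :
    dphi (vComp a v u v') (uComp a u u') (.inr b) (.inr b') ↔ dphi v' u' b b' :=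
  dphi_affine_iff (t := v a) hua

end Composition

theorem statement6_general {A B : Type} (a : A) (v u : A → ℕ → ℝ) (v' u' : B → ℕ → ℝ)
    (hu : ∀ x i, 0 < u x i) (hu' : ∀ b i, 0 < u' b i)
    (hv' : ∀ b i, 0 ≤ v' b i) (hv'1 : ∀ b i, v' b i + u' b i ≤ 1)
    (hsepA : ∀ x y : A, x ≠ y → ∃ i, sep v u i x y ∨ sep v u i y x) :
    ∀ p q : {x : A // x ≠ a} ⊕ B, p ≠ q →
      dphi (vComp a v u v') (uComp a u u') p q →
        (dirCompPhi a v u v' u' p q ∧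
          wphi (vComp a v u v') (uComp a u u') p q ≤ wtCompPhi a v u v' u' p q) ∨
        (dirCompPhi a v u v' u' q p ∧
          wphi (vComp a v u v') (uComp a u u') p q < wtCompPhi a v u v' u' q p) := by
  intro p q hpq hd
  have hf := refines_comp (v := v) (u' := u') (fun i => (hu a i).le) hv' hv'1
  have hpos := uComp_pos (a := a) hu hu'
  rcases p with x | b <;> rcases q with y | b'
  · exact hf.lax hpos (.inl x) (.inl y) (hsepA x y fun h => hpq (congrArg _ (Subtype.ext h))) hd
  · exact hf.lax hpos (.inl x) (.inr b') (hsepA x a x.2) hd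
  · exact hf.lax hpos (.inr b) (.inl y) (hsepA a y (Ne.symm y.2)) hd
  · exact .inl ⟨(dphi_comp_inr_iff (hu a)).1 hd, (wphi_comp_inr (hu a) b b').le⟩

/-- the separation-graph map `φ : 𝒞ₙ → 𝒢ₙᵉˣᵗ` is a lax morphism of operads:
`φ(c ∘_a d) ≤ φ(c) ∘_a φ(d)` in the poset `𝒢ₙᵉˣᵗ(A[B/a])`. -/
theorem statement6 {A B : Type} (a : A) (v u : A → ℕ → ℝ) (v' u' : B → ℕ → ℝ)
    (hu : ∀ x i, 0 < u x i) (hu' : ∀ b i, 0 < u' b i)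
    (hv' : ∀ b i, 0 ≤ v' b i) (hv'1 : ∀ b i, v' b i + u' b i ≤ 1)
    (hsepA : ∀ x y : A, x ≠ y → ∃ i, sep v u i x y ∨ sep v u i y x)
    (hsepB : ∀ b b' : B, b ≠ b' → ∃ i, sep v' u' i b b' ∨ sep v' u' i b' b) :
    ∀ p q : {x : A // x ≠ a} ⊕ B, p ≠ q →
      dphi (vComp a v u v') (uComp a u u') p q →
        (dirCompPhi a v u v' u' p q ∧
          wphi (vComp a v u v') (uComp a u u') p q ≤ wtCompPhi a v u v' u' p q) ∨
        (dirCompPhi a v u v' u' q p ∧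
          wphi (vComp a v u v') (uComp a u u') p q < wtCompPhi a v u v' u' q p) :=
  statement6_general a v u v' u' hu hu' hv' hv'1 hsepA
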